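/- Let E_X be a finite set, ε ∈ (0, 1/|E_X|), and for each parameter θ in a metric space let u_θ : E_X → ℝ depend continuously on θ. Then the correspondence θ ↦ argmax { ∑_x p(x) u_θ(x) : p ∈ ΔE_X^ε } is upper hemicontinuous: for every θ there is a neighborhood U of θ such that for all θ' ∈ U the argmax set at θ' is contained in the argmax set at θ. -/

import Mathlib

open Finset

/-- The truncated simplex `ΔE_X^ε`. -/
def trSimplex (EX : Finset ℝ) (ε : ℝ) : Set (EX → ℝ) :=
  {p | (∀ x, ε ≤ p x ∧ p x ≤ 1) ∧ ∑ x, p x = 1}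

/-!
A linear objective `∑ p x * w x` on the truncated simplex is maximised exactly by the `p`
that put the minimal weight `ε` on every `x` at which `w` is not maximal: any excess weight
there could be moved to a better point. So the argmax at `w` depends only on the strict order
relations `w x < w y`. For continuous `u_θ` the finitely many strict relations holding at `θ`
persist near `θ`, and there the argmax can only shrink.
-/

open Filter Topology

section Exchange

variable {ι : Type*} [Fintype ι]

theorem sum_mul_le_sum_mul_of_le_off_max {p q w : ι → ℝ} (hsum : ∑ x, p x = ∑ x, q x)
    (hle : ∀ x y, w x < w y → p x ≤ q x) : ∑ x, q x * w x ≤ ∑ x, p x * w x := by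
  cases isEmpty_or_nonempty ι
  · simp
  obtain ⟨m, -, hm⟩ := exists_max_image univ w univ_nonempty
  have hdiff : ∑ x, p x * w x - ∑ x, q x * w x = ∑ x, (p x - q x) * (w x - w m) := by
    simp only [sub_mul, mul_sub, sum_sub_distrib, ← sum_mul, hsum]
    ring
  have hnonneg : 0 ≤ ∑ x, (p x - q x) * (w x - w m) := sum_nonneg fun x _ => by
    rcases (hm x (mem_univ x)).lt_or_eq with hlt | heq
    · exact mul_nonneg_of_nonpos_of_nonpos (sub_nonpos.2 (hle x m hlt)) (sub_nonpos.2 hlt.le)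
    · simp [heq]
  linarith

variable [DecidableEq ι]

theorem sum_mul_add_single_sub_single (p w : ι → ℝ) (x y : ι) (δ : ℝ) :
    ∑ z, (p + Pi.single y δ - Pi.single x δ : ι → ℝ) z * w z =
      ∑ z, p z * w z + δ * (w y - w x) := by
  simp only [Pi.add_apply, Pi.sub_apply, add_mul, sub_mul, sum_add_distrib, sum_sub_distrib,
    Pi.single_apply, ite_mul, zero_mul, sum_ite_eq', mem_univ, if_true]
  ring

theorem sum_add_single_sub_single (p : ι → ℝ) (x y : ι) (δ : ℝ) :
    ∑ z, (p + Pi.single y δ - Pi.single x δ : ι → ℝ) z = ∑ z, p z := by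
  simpa using sum_mul_add_single_sub_single p 1 x y δ

end Exchange

def trSimplexArgmax (EX : Finset ℝ) (ε : ℝ) (w : EX → ℝ) : Set (EX → ℝ) :=
  {p ∈ trSimplex EX ε | ∀ q ∈ trSimplex EX ε, ∑ x, q x * w x ≤ ∑ x, p x * w x}

section Argmax

variable {EX : Finset ℝ} {ε : ℝ} {w : EX → ℝ} {p : EX → ℝ}

theorem trSimplex_add_le_one (hε : 0 ≤ ε) (hp : p ∈ trSimplex EX ε) {x y : EX} (hxy : x ≠ y) :
    p x + p y ≤ 1 := by
  rw [← sum_pair hxy, ← hp.2]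
  exact sum_le_univ_sum_of_nonneg fun z => hε.trans (hp.1 z).1

theorem trSimplexArgmax_eq_of_lt (hε : 0 ≤ ε) (hp : p ∈ trSimplexArgmax EX ε w) {x y : EX}
    (hxy : w x < w y) : p x = ε := by
  classical
  by_contra hne
  have hpx : ε < p x := lt_of_le_of_ne (hp.1.1 x).1 (Ne.symm hne)
  have hxy' : x ≠ y := fun h => hxy.ne (congrArg w h)
  set q := p + Pi.single y (p x - ε) - Pi.single x (p x - ε)
  have hq : q ∈ trSimplex EX ε := by
    refine ⟨fun z => ?_, (sum_add_single_sub_single p x y _).trans hp.1.2⟩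
    have hpxy := trSimplex_add_le_one hε hp.1 hxy'
    have hpy := hp.1.1 y
    by_cases hzx : z = x
    · subst hzx
      simp only [q, Pi.sub_apply, Pi.add_apply, Pi.single_eq_same, Pi.single_eq_of_ne hxy']
      constructor <;> linarith
    by_cases hzy : z = y
    · subst hzy
      simp only [q, Pi.sub_apply, Pi.add_apply, Pi.single_eq_same, Pi.single_eq_of_ne hzx]
      constructor <;> linarith
    · simpa [q, hzx, hzy] using hp.1.1 z
  have hgain : 0 < (p x - ε) * (w y - w x) := mul_pos (sub_pos.2 hpx) (sub_pos.2 hxy)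
  have hmax := hp.2 q hq
  rw [sum_mul_add_single_sub_single] at hmax
  linarith

theorem mem_trSimplexArgmax_of_eq_of_lt (hp : p ∈ trSimplex EX ε)
    (heq : ∀ x y, w x < w y → p x = ε) : p ∈ trSimplexArgmax EX ε w :=
  ⟨hp, fun _ hq => sum_mul_le_sum_mul_of_le_off_max (hp.2.trans hq.2.symm)
    fun x y hxy => (heq x y hxy).trans_le (hq.1 x).1⟩

theorem trSimplexArgmax_subset_of_lt_imp_lt (hε : 0 ≤ ε) {w' : EX → ℝ}
    (h : ∀ x y, w x < w y → w' x < w' y) : trSimplexArgmax EX ε w' ⊆ trSimplexArgmax EX ε w :=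
  fun _ hp => mem_trSimplexArgmax_of_eq_of_lt hp.1 fun x y hxy =>
    trSimplexArgmax_eq_of_lt hε hp (h x y hxy)

end Argmax

theorem eventually_lt_imp_lt {X ι α : Type*} [TopologicalSpace X] [Finite ι] [LinearOrder α]
    [TopologicalSpace α] [OrderClosedTopology α] {v : X → ι → α} {θ : X}
    (hv : ∀ i, ContinuousAt (fun θ' => v θ' i) θ) :
    ∀ᶠ θ' in 𝓝 θ, ∀ i j, v θ i < v θ j → v θ' i < v θ' j := by
  simp only [eventually_all]
  intro i j hij
  exact (hv i).eventually_lt (hv j) hij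

theorem argmax_upper_hemicontinuous
    {Θ : Type*} [MetricSpace Θ]
    (EX : Finset ℝ) (ε : ℝ)
    (hε : 0 < ε)
    (u : Θ → ℝ → ℝ)
    (hu : ∀ x : EX, Continuous fun θ => u θ (x : ℝ)) :
    ∀ θ : Θ, ∃ U ∈ nhds θ, ∀ θ' ∈ U,
      {p ∈ trSimplex EX ε | ∀ q ∈ trSimplex EX ε,
          ∑ x : EX, q x * u θ' x ≤ ∑ x : EX, p x * u θ' x}
        ⊆ {p ∈ trSimplex EX ε | ∀ q ∈ trSimplex EX ε,
          ∑ x : EX, q x * u θ x ≤ ∑ x : EX, p x * u θ x} := fun _ =>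
  ⟨_, eventually_lt_imp_lt (v := fun θ' (x : EX) => u θ' x) fun x => (hu x).continuousAt,
    fun _ hθ' => trSimplexArgmax_subset_of_lt_imp_lt hε.le hθ'⟩
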